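/- Let S = {arg(α) : α ∈ ℂ, P₃(α) = 0} be the set of principal arguments of the complex roots of P₃(T) = T⁸ − T⁷ + 2T⁶ − 4T⁵ − 2T⁴ − 12T³ + 18T² − 27T + 81. Then the ℚ-vector subspace of ℝ spanned by S ∪ {π} has dimension at most 4. (Equivalently, the angle rank of the corresponding isogeny class 4.3.ab_c_ae_ac is at most 3, so it is not maximal.) -/

import Mathlib

/-!
Over `ℚ(√-7)` the polynomial factors as `P₃ = f · f̄` with `f` monic of degree 4 and `f(0) = -9`.
The roots of `f̄` are the conjugates of those of `f`, and conjugation only negates an argument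
(or fixes `π`). The roots of `f` multiply to `-9`, so their arguments sum to an odd multiple of `π`;
hence `π` already lies in their `ℚ`-span, and the whole span is spanned by at most four arguments.
-/

open Polynomial

/-- The Weil polynomial of the Jacobian of `y² = x⁹ + x⁸ + x⁷ + 2x⁵ + x` over `𝔽₃`. -/
noncomputable def P3 : Polynomial ℂ :=
  X ^ 8 - X ^ 7 + 2 * X ^ 6 - 4 * X ^ 5 - 2 * X ^ 4 - 12 * X ^ 3 + 18 * X ^ 2 - 27 * X + 81

open Complex ComplexConjugate Real

theorem Real.pi_mem_of_coe_angle_eq_pi {V : Submodule ℚ ℝ} {x : ℝ} (hx : x ∈ V)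
    (h : (x : Real.Angle) = π) : π ∈ V := by
  obtain ⟨k, hk⟩ := Real.Angle.angle_eq_iff_two_pi_dvd_sub.mp h
  have hodd : ((2 * k + 1 : ℤ) : ℝ) ≠ 0 := by exact_mod_cast (by omega : 2 * k + 1 ≠ 0)
  have hπ : π = ((2 * k + 1 : ℤ) : ℚ)⁻¹ • x := by
    rw [Rat.smul_def, Rat.cast_inv, Rat.cast_intCast, eq_inv_mul_iff_mul_eq₀ hodd]
    push_cast
    linarith
  rw [hπ]
  exact V.smul_mem _ hx

theorem Complex.arg_multiset_prod_coe_angle {s : Multiset ℂ} (hs : (0 : ℂ) ∉ s) :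
    (s.prod.arg : Real.Angle) = ((s.map arg).sum : ℝ) := by
  induction s using Multiset.induction_on with
  | empty => simp
  | cons z s ih =>
    rw [Multiset.mem_cons, not_or] at hs
    rw [Multiset.prod_cons, arg_mul_coe_angle (Ne.symm hs.1) (Multiset.prod_ne_zero hs.2),
      ih hs.2, Multiset.map_cons, Multiset.sum_cons, Real.Angle.coe_add]

theorem Complex.pi_mem_span_arg_of_arg_prod_eq_pi {s : Multiset ℂ} (h : s.prod.arg = π) :
    π ∈ Submodule.span ℚ ((s.map arg).toFinset : Set ℝ) := by
  have hs : (0 : ℂ) ∉ s := fun h0 => by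
    simp [Multiset.prod_eq_zero h0, pi_ne_zero.symm] at h
  refine Real.pi_mem_of_coe_angle_eq_pi
    (multiset_sum_mem (s.map arg) fun y hy => Submodule.subset_span (by simpa using hy)) ?_
  rw [← arg_multiset_prod_coe_angle hs, h]

theorem Complex.arg_conj_mem {V : Submodule ℚ ℝ} (hπ : π ∈ V) {z : ℂ} (hz : arg z ∈ V) :
    arg (conj z) ∈ V := by
  rw [arg_conj]
  split_ifs
  exacts [hπ, V.neg_mem hz]

theorem rank_span_arg_roots_mul_map_conj_le {f : ℂ[X]} (hf : f.roots.prod.arg = π) :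
    Module.rank ℚ (Submodule.span ℚ
      ({x : ℝ | ∃ α : ℂ, (f * f.map (starRingEnd ℂ)).eval α = 0 ∧ arg α = x} ∪ {π}))
      ≤ f.natDegree := by
  set A := (f.roots.map arg).toFinset
  have hπ : π ∈ Submodule.span ℚ (A : Set ℝ) := pi_mem_span_arg_of_arg_prod_eq_pi hf
  have hf0 : f ≠ 0 := by
    rintro rfl
    simp [pi_ne_zero.symm] at hf
  have hroot : ∀ α, f.eval α = 0 → arg α ∈ Submodule.span ℚ (A : Set ℝ) := fun α hα =>
    Submodule.subset_span (by simpa [A] using ⟨α, ⟨hf0, hα⟩, rfl⟩)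
  have hspan : {x : ℝ | ∃ α : ℂ, (f * f.map (starRingEnd ℂ)).eval α = 0 ∧ arg α = x} ∪ {π}
      ⊆ Submodule.span ℚ (A : Set ℝ) := by
    rintro x (⟨α, hα, rfl⟩ | rfl)
    · rcases mul_eq_zero.mp ((eval_mul).symm.trans hα) with h | h
      · exact hroot α h
      · have hconj : f.eval (conj α) = 0 := by
          rwa [← conj_conj α, eval_map_apply, map_eq_zero] at h
        simpa using arg_conj_mem hπ (hroot _ hconj)
    · exact hπ
  calc _ ≤ Module.rank ℚ (Submodule.span ℚ (A : Set ℝ)) :=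
        Submodule.rank_mono (Submodule.span_le.2 hspan)
    _ ≤ A.card := rank_span_finset_le A
    _ ≤ f.natDegree := by
        exact_mod_cast (Multiset.toFinset_card_le _).trans
          ((Multiset.card_map _ _).trans_le (card_roots' f))

noncomputable def sqrtNegSeven : ℂ := (Real.sqrt 7 : ℂ) * I

theorem sqrtNegSeven_sq : sqrtNegSeven ^ 2 = -7 := by
  have h7 : ((Real.sqrt 7 : ℝ) : ℂ) ^ 2 = 7 := by
    rw [← ofReal_pow, Real.sq_sqrt (by norm_num : (0 : ℝ) ≤ 7)]
    norm_num
  rw [sqrtNegSeven, mul_pow, h7, I_sq]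
  norm_num

theorem conj_sqrtNegSeven : conj sqrtNegSeven = -sqrtNegSeven := by
  simp [sqrtNegSeven]

noncomputable def P3Factor : ℂ[X] :=
  X ^ 4 + C (-(1 + sqrtNegSeven) / 2) * X ^ 3 + C sqrtNegSeven * X ^ 2
    + C ((3 - 3 * sqrtNegSeven) / 2) * X + C (-9)

theorem P3_eq_mul_map_conj : P3 = P3Factor * P3Factor.map (starRingEnd ℂ) := by
  refine Polynomial.funext fun α => ?_
  simp only [P3, P3Factor, Polynomial.map_add, Polynomial.map_mul, Polynomial.map_pow,
    Polynomial.map_neg, Polynomial.map_ofNat, map_X, map_C, map_add, map_sub, map_mul, map_neg,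
    map_div₀, map_one, map_ofNat, conj_sqrtNegSeven, eval_add, eval_sub, eval_mul, eval_pow,
    eval_neg, eval_X, eval_C, eval_ofNat]
  linear_combination ((α * (α ^ 2 - 2 * α + 3)) / 2) ^ 2 * sqrtNegSeven_sq

theorem P3Factor_natDegree : P3Factor.natDegree = 4 := by
  unfold P3Factor
  compute_degree!

theorem P3Factor_roots_prod_arg : P3Factor.roots.prod.arg = π := by
  have hmonic : P3Factor.Monic := by
    unfold P3Factor
    monicity!
  have hcoeff := (IsAlgClosed.splits P3Factor).coeff_zero_eq_prod_roots_of_monic hmonic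
  have hprod : P3Factor.roots.prod = ((-9 : ℝ) : ℂ) := by
    have h0 : P3Factor.coeff 0 = -9 := by simp [P3Factor]
    rw [P3Factor_natDegree, h0] at hcoeff
    push_cast
    linear_combination -hcoeff
  rw [hprod, arg_ofReal_of_neg (by norm_num)]

theorem P3_angle_rank_le_three :
    Module.rank ℚ
      (Submodule.span ℚ ({x : ℝ | ∃ α : ℂ, P3.eval α = 0 ∧ Complex.arg α = x} ∪ {Real.pi}))
      ≤ 4 := by
  rw [P3_eq_mul_map_conj]
  calc _ ≤ (P3Factor.natDegree : Cardinal) :=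
        rank_span_arg_roots_mul_map_conj_le P3Factor_roots_prod_arg
    _ = 4 := by rw [P3Factor_natDegree]; rfl
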